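/- Let Φ be an irreducible reduced crystallographic simply-laced root system with base Δ and highest root θ, and let α ∈ Δ be an extreme Heisenberg root with neighbour β. Then both θ − α and θ − α − β are roots, and θ − α − β is orthogonal to α: ⟨α, θ − α − β⟩ = 0. (This is the paper's claim that δ_α := α_max − α − β is a root, for a nice Heisenberg root α.) -/

import Mathlib

open scoped InnerProductSpace

namespace PaperRS

variable {E : Type*} [NormedAddCommGroup E] [InnerProductSpace ℝ E]

/-- A reduced crystallographic simply-laced root system, normalized so that every root has
squared length `2` (hence `⟪δ, ε⟫` is the Cartan integer `⟨δ, ε^∨⟩`). -/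
structure IsRootSystem (Φ : Set E) : Prop where
  finite : Φ.Finite
  nonzero : (0 : E) ∉ Φ
  span_top : Submodule.span ℝ Φ = ⊤
  norm_two : ∀ α ∈ Φ, ⟪α, α⟫_ℝ = 2
  reduced : ∀ α ∈ Φ, ∀ t : ℝ, t • α ∈ Φ → t = 1 ∨ t = -1
  cartan_int : ∀ α ∈ Φ, ∀ β ∈ Φ, ∃ n : ℤ, ⟪α, β⟫_ℝ = (n : ℝ)
  reflect_mem : ∀ α ∈ Φ, ∀ β ∈ Φ, β - ⟪β, α⟫_ℝ • α ∈ Φ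

/-- Irreducibility: `Φ` is nonempty and cannot be split into two mutually orthogonal parts. -/
def IsIrreducible (Φ : Set E) : Prop :=
  Φ.Nonempty ∧ ∀ Φ₁ Φ₂ : Set E, Φ = Φ₁ ∪ Φ₂ →
    (∀ a ∈ Φ₁, ∀ b ∈ Φ₂, ⟪a, b⟫_ℝ = 0) → Φ₁ = ∅ ∨ Φ₂ = ∅

/-- The reflection in (the hyperplane orthogonal to) a root `α` of squared length `2`. -/
def sRefl (α : E) : Function.End E := fun x => x - ⟪x, α⟫_ℝ • α

/-- The group generated by the reflections in the elements of `S`; since every reflection is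
an involution, the submonoid generated by the reflections coincides with the generated group. -/
def genBy (S : Set E) : Submonoid (Function.End E) :=
  Submonoid.closure (sRefl '' S)

/-- The Weyl group of `Φ`: the group generated by the reflections in all the roots. -/
abbrev WeylGroup (Φ : Set E) : Submonoid (Function.End E) := genBy Φ

/-- A base (set of simple roots) of `Φ`, together with the (unique) integer coefficients
`coeff δ γ` of each root `δ` with respect to the simple roots. -/
structure Base (Φ : Set E) where
  Δ : Finset E
  coeff : E → E → ℤ
  subset : ↑Δ ⊆ Φ
  indep : LinearIndependent ℝ (fun γ : {x : E // x ∈ Δ} => (γ : E))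
  expand : ∀ δ ∈ Φ, δ = ∑ γ ∈ Δ, (coeff δ γ : ℝ) • γ
  sign : ∀ δ ∈ Φ, (∀ γ ∈ Δ, 0 ≤ coeff δ γ) ∨ (∀ γ ∈ Δ, coeff δ γ ≤ 0)

variable {Φ : Set E}

/-- `θ` is the highest root of `Φ` with respect to the base `B`. -/
def IsHighest (B : Base Φ) (θ : E) : Prop :=
  θ ∈ Φ ∧ ∀ δ ∈ Φ, ∀ γ ∈ B.Δ, B.coeff δ γ ≤ B.coeff θ γ

/-- `α` is a Heisenberg simple root: the highest root `θ` has `α`-coefficient `2`, and every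
root other than `±θ` has `α`-coefficient in `{-1, 0, 1}`. -/
def IsHeisenberg (B : Base Φ) (θ α : E) : Prop :=
  B.coeff θ α = 2 ∧
    ∀ δ ∈ Φ, δ ≠ θ → δ ≠ -θ →
      B.coeff δ α = -1 ∨ B.coeff δ α = 0 ∨ B.coeff δ α = 1

/-- `α` is an extreme simple root with (unique) neighbour `β`. -/
def IsExtreme (B : Base Φ) (α β : E) : Prop :=
  β ∈ B.Δ ∧ β ≠ α ∧ ⟪α, β⟫_ℝ ≠ 0 ∧
    ∀ γ ∈ B.Δ, γ ≠ α → ⟪α, γ⟫_ℝ ≠ 0 → γ = β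

/-- `Φ_α`: the roots with `α`-coefficient `1` that are orthogonal to `α`. -/
def PhiSet (B : Base Φ) (α : E) : Set E :=
  {ε ∈ Φ | B.coeff ε α = 1 ∧ ⟪ε, α⟫_ℝ = 0}

/-- `Ψ_α`: the roots `ε` with `α`-coefficient `1` and `⟪ε, α⟫ ≤ 0`. -/
def PsiSet (B : Base Φ) (α : E) : Set E :=
  {ε ∈ Φ | B.coeff ε α = 1 ∧ ⟪ε, α⟫_ℝ ≤ 0}

/-!
Reflecting `θ` in a simple root `γ ≠ α` keeps its `α`-coefficient equal to `2`, so by the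
Heisenberg property the reflection fixes `θ`, i.e. `θ ⟂ γ`. Expanding `⟪θ, θ⟫ = 2` in simple roots
then gives `⟪θ, α⟫ = 1`, while adjacent simple roots satisfy `⟪α, β⟫ = -1`. Hence the reflections
in `α` and then in `β` send `θ` to `θ - α` and `θ - α - β`, and `⟪α, θ - α - β⟫ = 1 - 2 + 1 = 0`.
-/

namespace Base

variable (B : Base Φ)

lemma coeff_eq_of_eq_sum {δ : E} (hδ : δ ∈ Φ) {d : E → ℤ}
    (h : δ = ∑ γ ∈ B.Δ, (d γ : ℝ) • γ) {γ : E} (hγ : γ ∈ B.Δ) : B.coeff δ γ = d γ := by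
  have hsum : ∑ i : B.Δ, (B.coeff δ i : ℝ) • (i : E) = ∑ i : B.Δ, (d i : ℝ) • (i : E) := by
    rw [Finset.sum_coe_sort B.Δ (fun γ => (B.coeff δ γ : ℝ) • γ),
      Finset.sum_coe_sort B.Δ (fun γ => (d γ : ℝ) • γ), ← B.expand δ hδ, ← h]
  exact_mod_cast Fintype.linearIndependent_iffₛ.mp B.indep _ _ hsum ⟨γ, hγ⟩

lemma coeff_of_mem [DecidableEq E] {α γ : E} (hα : α ∈ B.Δ) (hγ : γ ∈ B.Δ) :
    B.coeff α γ = if γ = α then 1 else 0 := by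
  refine B.coeff_eq_of_eq_sum (B.subset hα) (d := fun γ => if γ = α then 1 else 0) ?_ hγ
  simp [ite_smul, Finset.sum_ite_eq' B.Δ α, hα]

lemma coeff_self {α : E} (hα : α ∈ B.Δ) : B.coeff α α = 1 := by
  classical
  simp [B.coeff_of_mem hα hα]

lemma coeff_of_ne {α γ : E} (hα : α ∈ B.Δ) (hγ : γ ∈ B.Δ) (hne : γ ≠ α) : B.coeff α γ = 0 := by
  classical
  simp [B.coeff_of_mem hα hγ, hne]

lemma coeff_sub_smul {δ ε : E} (hδ : δ ∈ Φ) (hε : ε ∈ Φ) (c : ℤ) (h : δ - (c : ℝ) • ε ∈ Φ)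
    {γ : E} (hγ : γ ∈ B.Δ) : B.coeff (δ - (c : ℝ) • ε) γ = B.coeff δ γ - c * B.coeff ε γ := by
  refine B.coeff_eq_of_eq_sum h (d := fun γ => B.coeff δ γ - c * B.coeff ε γ) ?_ hγ
  conv_lhs => rw [B.expand δ hδ, B.expand ε hε]
  simp only [Finset.smul_sum, smul_smul, ← Finset.sum_sub_distrib, ← sub_smul]
  push_cast
  rfl

lemma coeff_neg {δ : E} (hδ : δ ∈ Φ) (h : -δ ∈ Φ) {γ : E} (hγ : γ ∈ B.Δ) :
    B.coeff (-δ) γ = -B.coeff δ γ := by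
  refine B.coeff_eq_of_eq_sum h (d := fun γ => -B.coeff δ γ) ?_ hγ
  conv_lhs => rw [B.expand δ hδ]
  simp only [Int.cast_neg, neg_smul, Finset.sum_neg_distrib]

lemma inner_eq_sum_coeff {δ : E} (hδ : δ ∈ Φ) (x : E) :
    ⟪x, δ⟫_ℝ = ∑ γ ∈ B.Δ, (B.coeff δ γ : ℝ) * ⟪x, γ⟫_ℝ := by
  conv_lhs => rw [B.expand δ hδ]
  simp only [inner_sum, real_inner_smul_right]

lemma sub_notMem {α β : E} (hα : α ∈ B.Δ) (hβ : β ∈ B.Δ) (hne : α ≠ β) : β - α ∉ Φ := by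
  intro h
  have h' : β - ((1 : ℤ) : ℝ) • α ∈ Φ := by simpa using h
  have hcα := B.coeff_sub_smul (B.subset hβ) (B.subset hα) 1 h' hα
  have hcβ := B.coeff_sub_smul (B.subset hβ) (B.subset hα) 1 h' hβ
  rw [B.coeff_self hα, B.coeff_of_ne hβ hα hne] at hcα
  rw [B.coeff_self hβ, B.coeff_of_ne hα hβ hne.symm] at hcβ
  rcases B.sign _ h' with hs | hs
  · have := hs α hα; omega
  · have := hs β hβ; omega

lemma ne_neg {α β : E} (hα : α ∈ B.Δ) (hβ : β ∈ B.Δ) (hne : α ≠ β) (hneg : -β ∈ Φ) :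
    α ≠ -β := by
  rintro rfl
  have := B.coeff_neg (B.subset hβ) hneg hα
  rw [B.coeff_self hα, B.coeff_of_ne hβ hα hne] at this
  omega

end Base

namespace IsRootSystem

variable (hΦ : IsRootSystem Φ)
include hΦ

lemma neg_mem {δ : E} (hδ : δ ∈ Φ) : -δ ∈ Φ := by
  have := hΦ.reflect_mem δ hδ δ hδ
  rwa [hΦ.norm_two δ hδ, two_smul, sub_add_cancel_left] at this

lemma sub_mem_of_inner_eq_one {δ ε : E} (hδ : δ ∈ Φ) (hε : ε ∈ Φ) (h : ⟪δ, ε⟫_ℝ = 1) :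
    δ - ε ∈ Φ := by
  simpa [h] using hΦ.reflect_mem ε hε δ hδ

lemma inner_lt_two {δ ε : E} (hδ : δ ∈ Φ) (hε : ε ∈ Φ) (hne : δ ≠ ε) : ⟪δ, ε⟫_ℝ < 2 := by
  have hpos : 0 < ⟪δ - ε, δ - ε⟫_ℝ := real_inner_self_pos.mpr (sub_ne_zero.mpr hne)
  rw [inner_sub_sub_self, hΦ.norm_two δ hδ, hΦ.norm_two ε hε, real_inner_comm δ ε] at hpos
  linarith

lemma neg_two_lt_inner {δ ε : E} (hδ : δ ∈ Φ) (hε : ε ∈ Φ) (hne : δ ≠ -ε) :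
    -2 < ⟪δ, ε⟫_ℝ := by
  have := hΦ.inner_lt_two hδ (hΦ.neg_mem hε) hne
  rw [inner_neg_right] at this
  linarith

lemma inner_eq_neg_one_of_mem_base (B : Base Φ) {α β : E} (hα : α ∈ B.Δ) (hβ : β ∈ B.Δ)
    (hne : α ≠ β) (h0 : ⟪α, β⟫_ℝ ≠ 0) : ⟪α, β⟫_ℝ = -1 := by
  have hαΦ := B.subset hα
  have hβΦ := B.subset hβ
  obtain ⟨n, hn⟩ := hΦ.cartan_int α hαΦ β hβΦ
  have hlt := hΦ.inner_lt_two hαΦ hβΦ hne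
  have hgt := hΦ.neg_two_lt_inner hαΦ hβΦ (B.ne_neg hα hβ hne (hΦ.neg_mem hβΦ))
  have hn1 : n ≠ 1 := by
    rintro rfl
    exact B.sub_notMem hα hβ hne
      (hΦ.sub_mem_of_inner_eq_one hβΦ hαΦ (by rw [real_inner_comm, hn, Int.cast_one]))
  rw [hn] at hlt hgt h0 ⊢
  have : n = -1 := by
    have : n < 2 := by exact_mod_cast hlt
    have : -2 < n := by exact_mod_cast hgt
    have : n ≠ 0 := by rintro rfl; simp at h0
    omega
  simp [this]

end IsRootSystem

namespace IsHeisenberg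

variable {B : Base Φ} {θ α : E} (hH : IsHeisenberg B θ α) (hθ : θ ∈ Φ) (hα : α ∈ B.Δ)
include hH hθ hα

lemma eq_of_coeff_eq_two {δ : E} (hδ : δ ∈ Φ) (h : B.coeff δ α = 2) : δ = θ := by
  by_contra hne
  by_cases hneg : δ = -θ
  · subst hneg
    have := B.coeff_neg hθ hδ hα
    have := hH.1
    omega
  · rcases hH.2 δ hδ hne hneg with h' | h' | h' <;> omega

lemma inner_eq_zero (hΦ : IsRootSystem Φ) {γ : E} (hγ : γ ∈ B.Δ) (hγα : γ ≠ α) :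
    ⟪θ, γ⟫_ℝ = 0 := by
  have hγΦ := B.subset hγ
  obtain ⟨m, hm⟩ := hΦ.cartan_int θ hθ γ hγΦ
  have hrefl : θ - (m : ℝ) • γ ∈ Φ := hm ▸ hΦ.reflect_mem γ hγΦ θ hθ
  have hcoeff : B.coeff (θ - (m : ℝ) • γ) α = 2 := by
    rw [B.coeff_sub_smul hθ hγΦ m hrefl hα, B.coeff_of_ne hγ hα hγα.symm, hH.1]
    ring
  have hfix := hH.eq_of_coeff_eq_two hθ hα hrefl hcoeff
  rw [sub_eq_self, smul_eq_zero] at hfix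
  rcases hfix with h | h
  · rw [hm, h]
  · exact absurd (h ▸ hγΦ) hΦ.nonzero

lemma inner_eq_one (hΦ : IsRootSystem Φ) : ⟪θ, α⟫_ℝ = 1 := by
  have hsum := B.inner_eq_sum_coeff hθ θ
  rw [Finset.sum_eq_single_of_mem α hα
      (fun γ hγ hne => by rw [hH.inner_eq_zero hθ hα hΦ hγ hne, mul_zero]),
    hΦ.norm_two θ hθ, hH.1] at hsum
  push_cast at hsum
  linarith

end IsHeisenberg

theorem delta_alpha_is_root_general
    (hΦ : IsRootSystem Φ) (B : Base Φ)
    {θ α β : E} (hθ : IsHighest B θ) (hα : α ∈ B.Δ)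
    (hext : IsExtreme B α β) (hH : IsHeisenberg B θ α) :
    θ - α ∈ Φ ∧ θ - α - β ∈ Φ ∧ ⟪α, θ - α - β⟫_ℝ = 0 := by
  obtain ⟨hβ, hβα, hαβ0, -⟩ := hext
  have hθα := hH.inner_eq_one hθ.1 hα hΦ
  have hθβ := hH.inner_eq_zero hθ.1 hα hΦ hβ hβα
  have hαβ := hΦ.inner_eq_neg_one_of_mem_base B hα hβ hβα.symm hαβ0
  have hθα_root := hΦ.sub_mem_of_inner_eq_one hθ.1 (B.subset hα) hθα
  refine ⟨hθα_root, hΦ.sub_mem_of_inner_eq_one hθα_root (B.subset hβ) ?_, ?_⟩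
  · rw [inner_sub_left, hθβ, hαβ]
    ring
  · rw [inner_sub_right, inner_sub_right, real_inner_comm θ α, hθα,
      hΦ.norm_two α (B.subset hα), hαβ]
    ring

/-- For an extreme Heisenberg simple root `α` with neighbour `β`, both `θ - α` and
`θ - α - β` are roots, and `θ - α - β` is orthogonal to `α`. -/
theorem delta_alpha_is_root
    (hΦ : IsRootSystem Φ) (hirr : IsIrreducible Φ) (B : Base Φ)
    {θ α β : E} (hθ : IsHighest B θ) (hα : α ∈ B.Δ)
    (hext : IsExtreme B α β) (hH : IsHeisenberg B θ α) :
    θ - α ∈ Φ ∧ θ - α - β ∈ Φ ∧ ⟪α, θ - α - β⟫_ℝ = 0 :=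
  delta_alpha_is_root_general hΦ B hθ hα hext hH

end PaperRS
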